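/- arXiv:2305.17340 — 2 statements merged into one kernel-verified Lean document; each statement's English description precedes it below -/
import Mathlib

section
/- Suppose (x*, y*) is a saddle-point of f. Then for every k ∈ ℕ: f(x*, y*) − f(x̂_k, ŷ_k) ≤ (1/(k+1)) ∑_{i=0}^{k} (1/(2τ_i))(‖x̂_k − x^i‖² − ‖x̂_k − x^{i+1}‖² − ‖x^i − x^{i+1}‖²) + (1/(k+1)) ∑_{i=0}^{k} (1/(2σ_i))(‖y* − y^i‖² − ‖y* − y^{i+1}‖² − ‖y^i − y^{i+1}‖²) + (1/(k+1)) ∑_{i=0}^{k} ( f(x^{i+1}, y*) − f(x̄^i, y*) + f(x̄^i, y^{i+1}) − f(x̂_k, y^{i+1}) − f(x^{i+1}, ȳ^{i+1}) + f(x̂_k, ȳ^{i+1}) ). -/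
/-!
Each iteration inequality (A), taken at `y*`, and (B), taken at `x̂ₖ`, add up to a bound on
`f(xⁱ⁺¹, y*) − f(x̂ₖ, yⁱ⁺¹)`. Averaging these bounds over `i ≤ k`, Jensen's inequality in the
convex variable gives `f(x̂ₖ, y*) ≤ avg f(xⁱ⁺¹, y*)` and in the concave variable
`avg f(x̂ₖ, yⁱ⁺¹) ≤ f(x̂ₖ, ŷₖ)`, while the saddle-point property gives `f(x*, y*) ≤ f(x̂ₖ, y*)`.
-/

open Finset

section Average

variable {ι E : Type*} [AddCommGroup E] [Module ℝ E] {s : Set E} {t : Finset ι} {p : ι → E}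

theorem Convex.finset_average_mem (hs : Convex ℝ s) (ht : t.Nonempty)
    (hp : ∀ i ∈ t, p i ∈ s) :
    (#t : ℝ)⁻¹ • ∑ i ∈ t, p i ∈ s := by
  rw [smul_sum]
  refine hs.sum_mem (fun _ _ => by positivity) ?_ hp
  simp [ht.card_ne_zero]

theorem ConvexOn.map_finset_average_le {g : E → ℝ} (hg : ConvexOn ℝ s g) (ht : t.Nonempty)
    (hp : ∀ i ∈ t, p i ∈ s) :
    g ((#t : ℝ)⁻¹ • ∑ i ∈ t, p i) ≤ (#t : ℝ)⁻¹ * ∑ i ∈ t, g (p i) := by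
  rw [smul_sum, mul_sum]
  refine hg.map_sum_le (fun _ _ => by positivity) ?_ hp
  simp [ht.card_ne_zero]

theorem ConcaveOn.finset_average_le_map {g : E → ℝ} (hg : ConcaveOn ℝ s g) (ht : t.Nonempty)
    (hp : ∀ i ∈ t, p i ∈ s) :
    (#t : ℝ)⁻¹ * ∑ i ∈ t, g (p i) ≤ g ((#t : ℝ)⁻¹ • ∑ i ∈ t, p i) := by
  rw [smul_sum, mul_sum]
  refine hg.le_map_sum (fun _ _ => by positivity) ?_ hp
  simp [ht.card_ne_zero]

end Average

theorem iterate_gap_le {H₁ H₂ : Type*} [NormedAddCommGroup H₁] [NormedAddCommGroup H₂]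
    (f : H₁ → H₂ → ℝ) (xs : ℕ → H₁) (ys : ℕ → H₂) (xbs : ℕ → H₁) (ybs : ℕ → H₂)
    (τs σs : ℕ → ℝ) {i : ℕ} {x : H₁} {y : H₂}
    (hA : (1/(2*σs i)) * (‖ys i - ys (i+1)‖^2 + ‖y - ys (i+1)‖^2 - ‖y - ys i‖^2)
        + f (xbs i) y - f (xbs i) (ys (i+1)) ≤ 0)
    (hB : (1/(2*τs i)) * (‖xs i - xs (i+1)‖^2 + ‖x - xs (i+1)‖^2 - ‖x - xs i‖^2)
        + f (xs (i+1)) (ybs (i+1)) - f x (ybs (i+1)) ≤ 0) :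
    f (xs (i+1)) y - f x (ys (i+1))
      ≤ (1/(2*τs i)) * (‖x - xs i‖^2 - ‖x - xs (i+1)‖^2 - ‖xs i - xs (i+1)‖^2)
        + (1/(2*σs i)) * (‖y - ys i‖^2 - ‖y - ys (i+1)‖^2 - ‖ys i - ys (i+1)‖^2)
        + (f (xs (i+1)) y - f (xbs i) y + f (xbs i) (ys (i+1)) - f x (ys (i+1))
          - f (xs (i+1)) (ybs (i+1)) + f x (ybs (i+1))) := by
  linear_combination hA + hB

theorem stmt_8_general
    {H₁ : Type*} [NormedAddCommGroup H₁] [InnerProductSpace ℝ H₁]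
    {H₂ : Type*} [NormedAddCommGroup H₂] [InnerProductSpace ℝ H₂]
    (X : Set H₁) (Y : Set H₂)
    (f : H₁ → H₂ → ℝ)
    (hfcvx : ∀ y ∈ Y, ConvexOn ℝ X (fun x => f x y))
    (hfccv : ∀ x ∈ X, ConcaveOn ℝ Y (fun y => f x y))
    (xs : ℕ → H₁) (ys : ℕ → H₂) (hxX : ∀ k, xs k ∈ X) (hyY : ∀ k, ys k ∈ Y)
    (xbs : ℕ → H₁) (ybs : ℕ → H₂)
    (τs σs : ℕ → ℝ)
    (hA : ∀ k, ∀ y ∈ Y,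
      (1/(2*σs k)) * (‖ys k - ys (k+1)‖^2 + ‖y - ys (k+1)‖^2 - ‖y - ys k‖^2)
        + f (xbs k) y - f (xbs k) (ys (k+1)) ≤ 0)
    (hB : ∀ k, ∀ x ∈ X,
      (1/(2*τs k)) * (‖xs k - xs (k+1)‖^2 + ‖x - xs (k+1)‖^2 - ‖x - xs k‖^2)
        + f (xs (k+1)) (ybs (k+1)) - f x (ybs (k+1)) ≤ 0)
    (xstar : H₁) (ystar : H₂) (hystar : ystar ∈ Y)
    (hsaddle : ∀ x ∈ X, ∀ y ∈ Y, f xstar y ≤ f xstar ystar ∧ f xstar ystar ≤ f x ystar)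
    (k : ℕ)
    (xhat : H₁) (yhat : H₂)
    (hxhat : xhat = (((k : ℝ)+1)⁻¹) • ∑ i ∈ Finset.range (k+1), xs (i+1))
    (hyhat : yhat = (((k : ℝ)+1)⁻¹) • ∑ i ∈ Finset.range (k+1), ys (i+1)) :
    f xstar ystar - f xhat yhat
    ≤ (((k : ℝ)+1)⁻¹) * ∑ i ∈ Finset.range (k+1),
        (1/(2*τs i)) * (‖xhat - xs i‖^2 - ‖xhat - xs (i+1)‖^2 - ‖xs i - xs (i+1)‖^2)
      + (((k : ℝ)+1)⁻¹) * ∑ i ∈ Finset.range (k+1),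
        (1/(2*σs i)) * (‖ystar - ys i‖^2 - ‖ystar - ys (i+1)‖^2 - ‖ys i - ys (i+1)‖^2)
      + (((k : ℝ)+1)⁻¹) * ∑ i ∈ Finset.range (k+1),
        (f (xs (i+1)) ystar - f (xbs i) ystar + f (xbs i) (ys (i+1)) - f xhat (ys (i+1))
          - f (xs (i+1)) (ybs (i+1)) + f xhat (ybs (i+1))) := by
  set n := range (k+1)
  have hn : n.Nonempty := nonempty_range_add_one
  have hcard : ((k : ℝ)+1)⁻¹ = (#n : ℝ)⁻¹ := by simp [n]
  rw [hcard] at hxhat hyhat ⊢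
  have hxhatX : xhat ∈ X :=
    hxhat ▸ (hfcvx ystar hystar).1.finset_average_mem hn fun i _ => hxX (i+1)
  have hjensen_x : f xhat ystar ≤ (#n : ℝ)⁻¹ * ∑ i ∈ n, f (xs (i+1)) ystar :=
    hxhat ▸ (hfcvx ystar hystar).map_finset_average_le hn fun i _ => hxX (i+1)
  have hjensen_y : (#n : ℝ)⁻¹ * ∑ i ∈ n, f xhat (ys (i+1)) ≤ f xhat yhat :=
    hyhat ▸ (hfccv xhat hxhatX).finset_average_le_map hn fun i _ => hyY (i+1)
  have hsaddle_x : f xstar ystar ≤ f xhat ystar := (hsaddle xhat hxhatX ystar hystar).2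
  rw [← mul_add, ← mul_add, ← sum_add_distrib, ← sum_add_distrib]
  calc f xstar ystar - f xhat yhat
      ≤ (#n : ℝ)⁻¹ * ∑ i ∈ n, (f (xs (i+1)) ystar - f xhat (ys (i+1))) := by
        rw [sum_sub_distrib, mul_sub]
        linarith
    _ ≤ _ := by
        gcongr with i
        exact iterate_gap_le f xs ys xbs ybs τs σs (hA i ystar hystar) (hB i xhat hxhatX)

/-- Proposition 3.8(ii): upper bound for `f(x*, y*) − f(x̂ₖ, ŷₖ)`. -/
theorem stmt_8
    {H₁ : Type*} [NormedAddCommGroup H₁] [InnerProductSpace ℝ H₁] [CompleteSpace H₁]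
    {H₂ : Type*} [NormedAddCommGroup H₂] [InnerProductSpace ℝ H₂] [CompleteSpace H₂]
    (X : Set H₁) (Y : Set H₂)
    (hXne : X.Nonempty) (hXcl : IsClosed X) (hXcv : Convex ℝ X)
    (hYne : Y.Nonempty) (hYcl : IsClosed Y) (hYcv : Convex ℝ Y)
    (f : H₁ → H₂ → ℝ)
    (hfcvx : ∀ y ∈ Y, ConvexOn ℝ X (fun x => f x y))
    (hfccv : ∀ x ∈ X, ConcaveOn ℝ Y (fun y => f x y))
    (xs : ℕ → H₁) (ys : ℕ → H₂) (hxX : ∀ k, xs k ∈ X) (hyY : ∀ k, ys k ∈ Y)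
    (xbs : ℕ → H₁) (ybs : ℕ → H₂)
    (τs σs : ℕ → ℝ) (hτ : ∀ k, 0 < τs k) (hσ : ∀ k, 0 < σs k)
    (hA : ∀ k, ∀ y ∈ Y,
      (1/(2*σs k)) * (‖ys k - ys (k+1)‖^2 + ‖y - ys (k+1)‖^2 - ‖y - ys k‖^2)
        + f (xbs k) y - f (xbs k) (ys (k+1)) ≤ 0)
    (hB : ∀ k, ∀ x ∈ X,
      (1/(2*τs k)) * (‖xs k - xs (k+1)‖^2 + ‖x - xs (k+1)‖^2 - ‖x - xs k‖^2)
        + f (xs (k+1)) (ybs (k+1)) - f x (ybs (k+1)) ≤ 0)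
    (xstar : H₁) (ystar : H₂) (hxstar : xstar ∈ X) (hystar : ystar ∈ Y)
    (hsaddle : ∀ x ∈ X, ∀ y ∈ Y, f xstar y ≤ f xstar ystar ∧ f xstar ystar ≤ f x ystar)
    (k : ℕ)
    (xhat : H₁) (yhat : H₂)
    (hxhat : xhat = (((k : ℝ)+1)⁻¹) • ∑ i ∈ Finset.range (k+1), xs (i+1))
    (hyhat : yhat = (((k : ℝ)+1)⁻¹) • ∑ i ∈ Finset.range (k+1), ys (i+1)) :
    f xstar ystar - f xhat yhat
    ≤ (((k : ℝ)+1)⁻¹) * ∑ i ∈ Finset.range (k+1),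
        (1/(2*τs i)) * (‖xhat - xs i‖^2 - ‖xhat - xs (i+1)‖^2 - ‖xs i - xs (i+1)‖^2)
      + (((k : ℝ)+1)⁻¹) * ∑ i ∈ Finset.range (k+1),
        (1/(2*σs i)) * (‖ystar - ys i‖^2 - ‖ystar - ys (i+1)‖^2 - ‖ys i - ys (i+1)‖^2)
      + (((k : ℝ)+1)⁻¹) * ∑ i ∈ Finset.range (k+1),
        (f (xs (i+1)) ystar - f (xbs i) ystar + f (xbs i) (ys (i+1)) - f xhat (ys (i+1))
          - f (xs (i+1)) (ybs (i+1)) + f xhat (ybs (i+1))) :=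
  stmt_8_general X Y f hfcvx hfccv xs ys hxX hyY xbs ybs τs σs hA hB xstar ystar hystar hsaddle k
    xhat yhat hxhat hyhat
end

section
/- Suppose H₁ and H₂ are finite-dimensional, f has a saddle-point, the parameter conditions (PC) hold, ‖K‖·limsup_{i→∞} τ_i < 1/2 and ‖K‖·limsup_{i→∞} σ_i < 1/2, and moreover sup_{k∈ℕ} α_k < ∞, sup_{k∈ℕ} β_k < ∞, 0 < inf_{k∈ℕ} σ_k ≤ sup_{k∈ℕ} σ_k < ∞ and 0 < inf_{k∈ℕ} τ_k ≤ sup_{k∈ℕ} τ_k < ∞. Then the sequence ((x^k, y^k))_{k∈ℕ} converges (in norm) to a saddle-point of f. -/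
open RealInnerProductSpace Filter Topology Set
open scoped InnerProduct

/-!
Fix a saddle point `(p, q)` and consider the energy
`E_k = ‖x_{k+1} - p‖²/(2τ_{k+1}) + ‖y_{k+1} - q‖²/(2σ_{k+1}) + ⟪K(x_{k+1} - x_k), y_{k+1} - q⟫
  + ‖K‖ ‖x_{k+1} - x_k‖²`.
Test the two proximal inequalities of one step with `(p, q)`, add the saddle inequality and bound
the cross terms by Young's inequality: (PC) lets the change of step sizes absorb the terms
weighted by `β_k²` and `(1 - α_k)²`, so `E_k` drops by at least
`δ (‖x_{k+2} - x_{k+1}‖² + ‖y_{k+2} - y_{k+1}‖²)`. The margin `δ > 0` exists because (PC) makes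
the step sizes increase, so `‖K‖ τ_k ≤ ‖K‖ limsup τ < 1/2`, and likewise for `σ`. Since
`E_k ≥ δ (‖x_{k+1} - p‖² + ‖y_{k+1} - q‖²)`, the increments vanish and the iterates are bounded.
(PC) also forces `‖K‖ β_k² → 0` and `‖K‖ (1 - α_k)² → 0`, so `K x̄^k` and `K* ȳ^k` follow `K x^k`
and `K* y^k`. In finite dimensions a subsequence converges; passing to the limit in the proximal
inequalities (closed epigraphs of `g` and `h`) shows that its limit is a saddle point. For that
saddle point `E_k` is nonincreasing and tends to `0` along the subsequence, hence everywhere,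
which forces the whole sequence to converge.
-/

section Sequences

lemma tendsto_zero_of_add_le {u r : ℕ → ℝ} (h : ∀ k, u (k + 1) + r k ≤ u k)
    (hr : ∀ k, 0 ≤ r k) (hu : BddBelow (range u)) : Tendsto r atTop (𝓝 0) := by
  have hlim := tendsto_atTop_ciInf (antitone_nat_of_succ_le fun k => by linarith [h k, hr k]) hu
  have hdiff := hlim.sub (hlim.comp (tendsto_add_atTop_nat 1))
  rw [sub_self] at hdiff
  exact squeeze_zero hr (fun k => by simp only [Function.comp_apply]; linarith [h k]) hdiff

lemma exists_pos_add_le_inv_div_two {τ : ℕ → ℝ} {c : ℝ} (hpos : ∀ k, 0 < τ k)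
    (hmono : Monotone τ) (hbdd : BddAbove (range τ)) (hc : c * limsup τ atTop < 1 / 2) :
    ∃ δ > 0, ∀ k, c + δ ≤ (τ k)⁻¹ / 2 := by
  rw [(tendsto_atTop_ciSup hmono hbdd).limsup_eq] at hc
  have hle : ∀ k, τ k ≤ ⨆ k, τ k := le_ciSup hbdd
  have hS : 0 < ⨆ k, τ k := (hpos 0).trans_le (hle 0)
  refine ⟨(2 * ⨆ k, τ k)⁻¹ - c, sub_pos.2 ?_, fun k => ?_⟩
  · rw [← one_div, lt_div_iff₀ (by positivity)]
    linarith
  · have := inv_anti₀ (by linarith [hpos k]) (by linarith [hle k] : 2 * τ k ≤ 2 * ⨆ k, τ k)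
    have e : (τ k)⁻¹ / 2 = (2 * τ k)⁻¹ := by rw [mul_inv]; ring
    linarith

lemma tendsto_zero_of_norm_sq_le {ι E : Type*} [SeminormedAddCommGroup E] {l : Filter ι}
    {v : ι → E} {r : ι → ℝ}
    (h : ∀ i, ‖v i‖ ^ 2 ≤ r i) (hr : Tendsto r l (𝓝 0)) : Tendsto v l (𝓝 0) := by
  refine squeeze_zero_norm (fun i => ?_) (by simpa using hr.sqrt)
  exact (Real.le_sqrt (norm_nonneg _) ((sq_nonneg _).trans (h i))).2 (h i)

section StepSizes

variable {τ a : ℕ → ℝ} {c : ℝ}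

lemma antitone_inv_of_mul_sq_eq (hc : 0 ≤ c) (h : ∀ k, c * a k ^ 2 = 1 / τ k - 1 / τ (k + 1)) :
    Antitone fun k => (τ k)⁻¹ :=
  antitone_nat_of_succ_le fun k => by
    have := h k
    rw [one_div, one_div] at this
    nlinarith [mul_nonneg hc (sq_nonneg (a k))]

lemma monotone_of_mul_sq_eq (hc : 0 ≤ c) (hpos : ∀ k, 0 < τ k)
    (h : ∀ k, c * a k ^ 2 = 1 / τ k - 1 / τ (k + 1)) : Monotone τ := fun _ _ hmn =>
  (inv_le_inv₀ (hpos _) (hpos _)).1 (antitone_inv_of_mul_sq_eq hc h hmn)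

lemma bddBelow_range_inv (hpos : ∀ k, 0 < τ k) : BddBelow (range fun k => (τ k)⁻¹) :=
  ⟨0, forall_mem_range.2 fun k => (inv_pos.2 (hpos k)).le⟩

lemma exists_tendsto_inv_of_mul_sq_eq (hc : 0 ≤ c) (hpos : ∀ k, 0 < τ k)
    (h : ∀ k, c * a k ^ 2 = 1 / τ k - 1 / τ (k + 1)) :
    ∃ A, Tendsto (fun k => (τ k)⁻¹) atTop (𝓝 A) :=
  ⟨_, tendsto_atTop_ciInf (antitone_inv_of_mul_sq_eq hc h) (bddBelow_range_inv hpos)⟩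

lemma tendsto_mul_sq_of_mul_sq_eq (hc : 0 ≤ c) (hpos : ∀ k, 0 < τ k)
    (h : ∀ k, c * a k ^ 2 = 1 / τ k - 1 / τ (k + 1)) :
    Tendsto (fun k => c * a k ^ 2) atTop (𝓝 0) :=
  tendsto_zero_of_add_le (fun k => by rw [h k, one_div, one_div]; linarith)
    (fun k => mul_nonneg hc (sq_nonneg _)) (bddBelow_range_inv hpos)

end StepSizes

end Sequences

section InnerProduct

variable {E F : Type*} [NormedAddCommGroup E] [InnerProductSpace ℝ E]
  [NormedAddCommGroup F] [InnerProductSpace ℝ F]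

lemma real_inner_sub_sub_eq (a b c : E) :
    ⟪a - b, c - b⟫ = (‖b - a‖ ^ 2 + ‖b - c‖ ^ 2 - ‖a - c‖ ^ 2) / 2 := by
  rw [show a - c = (a - b) - (c - b) by abel, norm_sub_sq_real (a - b) (c - b), norm_sub_rev b a,
    norm_sub_rev b c]
  ring

lemma mul_inner_apply_le (K : E →L[ℝ] F) {t a b : ℝ} (ha : 0 ≤ a) (hb : 0 ≤ b)
    (hab : t ^ 2 ≤ a * b) (u : E) (v : F) :
    t * ⟪K u, v⟫ ≤ ‖K‖ / 2 * (a * ‖u‖ ^ 2 + b * ‖v‖ ^ 2) := by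
  have hamgm : 2 * (|t| * ‖u‖ * ‖v‖) ≤ a * ‖u‖ ^ 2 + b * ‖v‖ ^ 2 := by
    refine (pow_le_pow_iff_left₀ (by positivity) (by positivity) two_ne_zero).1 ?_
    calc (2 * (|t| * ‖u‖ * ‖v‖)) ^ 2 = t ^ 2 * (4 * ‖u‖ ^ 2 * ‖v‖ ^ 2) := by rw [← sq_abs t]; ring
      _ ≤ a * b * (4 * ‖u‖ ^ 2 * ‖v‖ ^ 2) := by gcongr
      _ ≤ (a * ‖u‖ ^ 2 + b * ‖v‖ ^ 2) ^ 2 := by nlinarith [sq_nonneg (a * ‖u‖ ^ 2 - b * ‖v‖ ^ 2)]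
  calc t * ⟪K u, v⟫ ≤ |t| * (‖K u‖ * ‖v‖) :=
        (le_abs_self _).trans (by rw [abs_mul]; gcongr; exact abs_real_inner_le_norm _ _)
    _ ≤ |t| * (‖K‖ * ‖u‖ * ‖v‖) := by gcongr; exact K.le_opNorm u
    _ ≤ ‖K‖ / 2 * (a * ‖u‖ ^ 2 + b * ‖v‖ ^ 2) := by nlinarith [norm_nonneg K]

lemma tendsto_apply_smul_zero {ι : Type*} {l : Filter ι} (K : E →L[ℝ] F) {a : ι → ℝ}
    {v : ι → E} (ha : Tendsto (fun i => ‖K‖ * a i ^ 2) l (𝓝 0)) (hv : Tendsto v l (𝓝 0)) :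
    Tendsto (fun i => K (a i • v i)) l (𝓝 0) := by
  refine squeeze_zero_norm (fun i => ?_)
    (by simpa using (ha.add ((hv.norm.pow 2).const_mul ‖K‖)).div_const 2)
  calc ‖K (a i • v i)‖ ≤ ‖K‖ * (|a i| * ‖v i‖) := by
        simpa [norm_smul] using K.le_opNorm (a i • v i)
    _ ≤ (‖K‖ * a i ^ 2 + ‖K‖ * ‖v i‖ ^ 2) / 2 := by
        nlinarith [norm_nonneg K, two_mul_le_add_sq |a i| ‖v i‖, sq_abs (a i)]

lemma LowerSemicontinuous.inner_add_le_of_tendsto {ι : Type*} {l : Filter ι} [l.NeBot]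
    {g : E → ℝ} (hg : LowerSemicontinuous g) {x w : ι → E} {x₀ w₀ z : E}
    (hx : Tendsto x l (𝓝 x₀)) (hw : Tendsto w l (𝓝 w₀))
    (h : ∀ i, ⟪w i, z - x i⟫ + g (x i) ≤ g z) : ⟪w₀, z - x₀⟫ + g x₀ ≤ g z := by
  have hmem := hg.isClosed_epigraph.mem_of_tendsto
    (hx.prodMk_nhds (tendsto_const_nhds.sub (hw.inner (tendsto_const_nhds.sub hx))))
    (Eventually.of_forall fun i => show g (x i) ≤ g z - ⟪w i, z - x i⟫ by linarith [h i])
  simp only [mem_ofPred_eq] at hmem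
  linarith

end InnerProduct

section PrimalDual

variable {H₁ H₂ : Type*} [NormedAddCommGroup H₁] [InnerProductSpace ℝ H₁]
  [NormedAddCommGroup H₂] [InnerProductSpace ℝ H₂]

def lagrangian (K : H₁ →L[ℝ] H₂) (g : H₁ → ℝ) (h : H₂ → ℝ) (x : H₁) (y : H₂) : ℝ :=
  ⟪K x, y⟫ + g x - h y

/-- `d` stands for the last primal increment `x_k - x_{k-1}`. -/
noncomputable def primalDualEnergy (K : H₁ →L[ℝ] H₂) (τ σ : ℝ) (p : H₁) (q : H₂) (x d : H₁)
    (y : H₂) : ℝ :=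
  τ⁻¹ / 2 * ‖x - p‖ ^ 2 + σ⁻¹ / 2 * ‖y - q‖ ^ 2 + ⟪K d, y - q⟫ + ‖K‖ * ‖d‖ ^ 2

/-- Shifted by one so that only the extrapolations `xbs (k + 1)` enter, never `xbs 0`. -/
noncomputable def iterateEnergy (K : H₁ →L[ℝ] H₂) (τs σs : ℕ → ℝ) (xs : ℕ → H₁) (ys : ℕ → H₂)
    (p : H₁) (q : H₂) (k : ℕ) : ℝ :=
  primalDualEnergy K (τs (k + 1)) (σs (k + 1)) p q (xs (k + 1)) (xs (k + 1) - xs k) (ys (k + 1))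

variable {K : H₁ →L[ℝ] H₂} {g : H₁ → ℝ} {h : H₂ → ℝ} {τs σs : ℕ → ℝ} {xs : ℕ → H₁} {ys : ℕ → H₂}
  {p : H₁} {q : H₂} {δ : ℝ}

lemma mul_add_le_primalDualEnergy {τ σ : ℝ} (hτ : ‖K‖ + δ ≤ τ⁻¹ / 2)
    (hσ : ‖K‖ + δ ≤ σ⁻¹ / 2) (p x d : H₁) (q y : H₂) :
    δ * (‖x - p‖ ^ 2 + ‖y - q‖ ^ 2) ≤ primalDualEnergy K τ σ p q x d y := by
  have hyoung := mul_inner_apply_le K zero_le_one zero_le_one (by norm_num : (-1 : ℝ) ^ 2 ≤ 1 * 1)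
    d (y - q)
  have hKx := mul_nonneg (norm_nonneg K) (sq_nonneg ‖x - p‖)
  have hKy := mul_nonneg (norm_nonneg K) (sq_nonneg ‖y - q‖)
  have hKd := mul_nonneg (norm_nonneg K) (sq_nonneg ‖d‖)
  have hx := mul_le_mul_of_nonneg_right hτ (sq_nonneg ‖x - p‖)
  have hy := mul_le_mul_of_nonneg_right hσ (sq_nonneg ‖y - q‖)
  unfold primalDualEnergy
  linarith

lemma tendsto_primalDualEnergy_zero {ι : Type*} {l : Filter ι} {τ σ : ι → ℝ} {A B : ℝ}
    {x d : ι → H₁} {y : ι → H₂}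
    (hτ : Tendsto (fun i => (τ i)⁻¹) l (𝓝 A)) (hσ : Tendsto (fun i => (σ i)⁻¹) l (𝓝 B))
    (hx : Tendsto x l (𝓝 p)) (hd : Tendsto d l (𝓝 0)) (hy : Tendsto y l (𝓝 q)) :
    Tendsto (fun i => primalDualEnergy K (τ i) (σ i) p q (x i) (d i) (y i)) l (𝓝 0) := by
  have hx' := tendsto_sub_nhds_zero_iff.2 hx
  have hy' := tendsto_sub_nhds_zero_iff.2 hy
  have hKd : Tendsto (fun i => K (d i)) l (𝓝 0) := by
    rw [← map_zero K]; exact (K.continuous.tendsto 0).comp hd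
  simpa [primalDualEnergy] using ((((hτ.div_const 2).mul (hx'.norm.pow 2)).add
    ((hσ.div_const 2).mul (hy'.norm.pow 2))).add (hKd.inner hy')).add
    ((hd.norm.pow 2).const_mul ‖K‖)

lemma mul_add_le_iterateEnergy (hτδ : ∀ k, ‖K‖ + δ ≤ (τs k)⁻¹ / 2)
    (hσδ : ∀ k, ‖K‖ + δ ≤ (σs k)⁻¹ / 2) (k : ℕ) :
    δ * (‖xs (k + 1) - p‖ ^ 2 + ‖ys (k + 1) - q‖ ^ 2) ≤ iterateEnergy K τs σs xs ys p q k :=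
  mul_add_le_primalDualEnergy (hτδ _) (hσδ _) _ _ _ _ _

lemma bddBelow_range_iterateEnergy (hδ : 0 ≤ δ) (hτδ : ∀ k, ‖K‖ + δ ≤ (τs k)⁻¹ / 2)
    (hσδ : ∀ k, ‖K‖ + δ ≤ (σs k)⁻¹ / 2) :
    BddBelow (range (iterateEnergy K τs σs xs ys p q)) :=
  ⟨0, forall_mem_range.2 fun k =>
    (mul_nonneg hδ (by positivity)).trans (mul_add_le_iterateEnergy hτδ hσδ k)⟩

variable [CompleteSpace H₁] [CompleteSpace H₂]

lemma primalDualEnergy_step_add_le {x x' d : H₁} {y y' : H₂} {τ τ' σ σ' α β : ℝ}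
    (hx : ⟪τ⁻¹ • (x - x') - (K†) (y' + β • (y' - y)), p - x'⟫ + g x' ≤ g p)
    (hy : ⟪σ⁻¹ • (y - y') + K (x + α • d), q - y'⟫ + h y' ≤ h q)
    (hgap : lagrangian K g h p y' ≤ lagrangian K g h x' q)
    (hτ : ‖K‖ * β ^ 2 = 1 / τ - 1 / τ') (hσ : ‖K‖ * (1 - α) ^ 2 = 1 / σ - 1 / σ')
    (hδτ : ‖K‖ + δ ≤ τ⁻¹ / 2) (hδσ : ‖K‖ + δ ≤ σ⁻¹ / 2) :
    primalDualEnergy K τ' σ' p q x' (x' - x) y' + δ * (‖x' - x‖ ^ 2 + ‖y' - y‖ ^ 2)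
      ≤ primalDualEnergy K τ σ p q x d y := by
  rw [inner_sub_left, real_inner_smul_left, ContinuousLinearMap.adjoint_inner_left,
    real_inner_comm (K (p - x'))] at hx
  rw [inner_add_left, real_inner_smul_left] at hy
  rw [one_div, one_div] at hτ hσ
  unfold lagrangian at hgap
  have hx_three :
      τ⁻¹ * ⟪x - x', p - x'⟫ = τ⁻¹ * ((‖x' - x‖ ^ 2 + ‖x' - p‖ ^ 2 - ‖x - p‖ ^ 2) / 2) := by
    rw [real_inner_sub_sub_eq]
  have hy_three :
      σ⁻¹ * ⟪y - y', q - y'⟫ = σ⁻¹ * ((‖y' - y‖ ^ 2 + ‖y' - q‖ ^ 2 - ‖y - q‖ ^ 2) / 2) := by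
    rw [real_inner_sub_sub_eq]
  have hcross : ⟪K (p - x'), y' + β • (y' - y)⟫ - ⟪K (x + α • d), q - y'⟫ + ⟪K x', q⟫ - ⟪K p, y'⟫
      = -⟪K (x' - x), y' - q⟫ + ⟪K d, y - q⟫ + (α - 1) * ⟪K d, y' - q⟫ + 1 * ⟪K d, y' - y⟫
        + β * ⟪K (p - x'), y' - y⟫ := by
    simp only [map_add, map_sub, map_smul, inner_add_left, inner_sub_left, inner_add_right,
      inner_sub_right, real_inner_smul_left, real_inner_smul_right]
    ring
  have hβ := mul_inner_apply_le K (t := β) (sq_nonneg β) zero_le_one (mul_one _).ge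
    (p - x') (y' - y)
  have hα := mul_inner_apply_le K (t := α - 1) zero_le_one (sq_nonneg (1 - α))
    (by rw [one_mul, sub_sq_comm]) d (y' - q)
  have hd := mul_inner_apply_le K (t := 1) zero_le_one zero_le_one (by norm_num) d (y' - y)
  have hτ' : ‖K‖ / 2 * (β ^ 2 * ‖p - x'‖ ^ 2) = (τ⁻¹ - τ'⁻¹) / 2 * ‖x' - p‖ ^ 2 := by
    rw [norm_sub_rev p x', ← hτ]; ring
  have hσ' : ‖K‖ / 2 * ((1 - α) ^ 2 * ‖y' - q‖ ^ 2) = (σ⁻¹ - σ'⁻¹) / 2 * ‖y' - q‖ ^ 2 := by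
    rw [← hσ]; ring
  have hmx := mul_le_mul_of_nonneg_right hδτ (sq_nonneg ‖x' - x‖)
  have hmy := mul_le_mul_of_nonneg_right hδσ (sq_nonneg ‖y' - y‖)
  unfold primalDualEnergy
  linarith

lemma isSaddlePointOn_lagrangian_of_inner_add_le {X : Set H₁} {Y : Set H₂}
    (hx : ∀ x ∈ X, ⟪-(K†) q, x - p⟫ + g p ≤ g x) (hy : ∀ y ∈ Y, ⟪K p, y - q⟫ + h q ≤ h y) :
    IsSaddlePointOn X Y (lagrangian K g h) p q := by
  intro x hx' y hy'
  have h₁ := hx x hx'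
  have h₂ := hy y hy'
  rw [inner_neg_left, ContinuousLinearMap.adjoint_inner_left, map_sub, inner_sub_right,
    real_inner_comm _ q, real_inner_comm _ q] at h₁
  rw [inner_sub_right] at h₂
  unfold lagrangian
  linarith

structure IsPrimalDualIteration (X : Set H₁) (Y : Set H₂) (K : H₁ →L[ℝ] H₂) (g : H₁ → ℝ)
    (h : H₂ → ℝ) (τs σs αs βs : ℕ → ℝ) (xs xbs : ℕ → H₁) (ys ybs : ℕ → H₂) : Prop where
  mem_X : ∀ k, xs k ∈ X
  mem_Y : ∀ k, ys k ∈ Y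
  τ_pos : ∀ k, 0 < τs k
  σ_pos : ∀ k, 0 < σs k
  xbar_succ : ∀ k, xbs (k + 1) = xs (k + 1) + αs (k + 1) • (xs (k + 1) - xs k)
  ybar_succ : ∀ k, ybs (k + 1) = ys (k + 1) + βs k • (ys (k + 1) - ys k)
  x_step : ∀ k, ∀ x ∈ X,
    ⟪(τs k)⁻¹ • (xs k - xs (k + 1)) - (K†) (ybs (k + 1)), x - xs (k + 1)⟫ + g (xs (k + 1)) ≤ g x
  y_step : ∀ k, ∀ y ∈ Y,
    ⟪(σs k)⁻¹ • (ys k - ys (k + 1)) + K (xbs k), y - ys (k + 1)⟫ + h (ys (k + 1)) ≤ h y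
  pc_τ : ∀ k, ‖K‖ * βs k ^ 2 = 1 / τs k - 1 / τs (k + 1)
  pc_σ : ∀ k, ‖K‖ * (1 - αs k) ^ 2 = 1 / σs k - 1 / σs (k + 1)

namespace IsPrimalDualIteration

variable {X : Set H₁} {Y : Set H₂} {αs βs : ℕ → ℝ} {xbs : ℕ → H₁} {ybs : ℕ → H₂}

lemma iterateEnergy_succ_add_le (it : IsPrimalDualIteration X Y K g h τs σs αs βs xs xbs ys ybs)
    (hτδ : ∀ k, ‖K‖ + δ ≤ (τs k)⁻¹ / 2) (hσδ : ∀ k, ‖K‖ + δ ≤ (σs k)⁻¹ / 2) (hp : p ∈ X)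
    (hq : q ∈ Y) (hpq : IsSaddlePointOn X Y (lagrangian K g h) p q) (k : ℕ) :
    iterateEnergy K τs σs xs ys p q (k + 1)
        + δ * (‖xs (k + 2) - xs (k + 1)‖ ^ 2 + ‖ys (k + 2) - ys (k + 1)‖ ^ 2)
      ≤ iterateEnergy K τs σs xs ys p q k := by
  have hx := it.x_step (k + 1) p hp
  have hy := it.y_step (k + 1) q hq
  rw [it.ybar_succ (k + 1)] at hx
  rw [it.xbar_succ k] at hy
  exact primalDualEnergy_step_add_le hx hy (hpq _ (it.mem_X _) _ (it.mem_Y _)) (it.pc_τ _)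
    (it.pc_σ _) (hτδ _) (hσδ _)

lemma antitone_iterateEnergy (it : IsPrimalDualIteration X Y K g h τs σs αs βs xs xbs ys ybs)
    (hδ : 0 ≤ δ) (hτδ : ∀ k, ‖K‖ + δ ≤ (τs k)⁻¹ / 2) (hσδ : ∀ k, ‖K‖ + δ ≤ (σs k)⁻¹ / 2)
    (hp : p ∈ X) (hq : q ∈ Y) (hpq : IsSaddlePointOn X Y (lagrangian K g h) p q) :
    Antitone (iterateEnergy K τs σs xs ys p q) :=
  antitone_nat_of_succ_le fun k => by
    have := it.iterateEnergy_succ_add_le hτδ hσδ hp hq hpq k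
    linarith [mul_nonneg hδ (add_nonneg (sq_nonneg ‖xs (k + 2) - xs (k + 1)‖)
      (sq_nonneg ‖ys (k + 2) - ys (k + 1)‖))]

lemma tendsto_sub_succ (it : IsPrimalDualIteration X Y K g h τs σs αs βs xs xbs ys ybs)
    (hδ : 0 < δ) (hτδ : ∀ k, ‖K‖ + δ ≤ (τs k)⁻¹ / 2) (hσδ : ∀ k, ‖K‖ + δ ≤ (σs k)⁻¹ / 2)
    (hp : p ∈ X) (hq : q ∈ Y) (hpq : IsSaddlePointOn X Y (lagrangian K g h) p q) :
    Tendsto (fun k => xs (k + 1) - xs k) atTop (𝓝 0) ∧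
      Tendsto (fun k => ys (k + 1) - ys k) atTop (𝓝 0) := by
  have hr := (tendsto_zero_of_add_le (it.iterateEnergy_succ_add_le hτδ hσδ hp hq hpq)
    (fun k => by positivity) (bddBelow_range_iterateEnergy hδ.le hτδ hσδ)).div_const δ
  rw [zero_div] at hr
  constructor
  · refine (tendsto_add_atTop_iff_nat 1).1 (tendsto_zero_of_norm_sq_le (fun k => ?_) hr)
    rw [le_div_iff₀ hδ]
    nlinarith [sq_nonneg ‖ys (k + 2) - ys (k + 1)‖]
  · refine (tendsto_add_atTop_iff_nat 1).1 (tendsto_zero_of_norm_sq_le (fun k => ?_) hr)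
    rw [le_div_iff₀ hδ]
    nlinarith [sq_nonneg ‖xs (k + 2) - xs (k + 1)‖]

lemma tendsto_apply_xbar_sub (it : IsPrimalDualIteration X Y K g h τs σs αs βs xs xbs ys ybs)
    (hdx : Tendsto (fun k => xs (k + 1) - xs k) atTop (𝓝 0)) :
    Tendsto (fun k => K (xbs (k + 1)) - K (xs (k + 1))) atTop (𝓝 0) := by
  have hα : Tendsto (fun k => ‖K‖ * (αs (k + 1) - 1) ^ 2) atTop (𝓝 0) := by
    simpa only [Function.comp_def, sub_sq_comm] using
      (tendsto_mul_sq_of_mul_sq_eq (norm_nonneg K) it.σ_pos it.pc_σ).comp (tendsto_add_atTop_nat 1)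
  have e : ∀ k, K (xbs (k + 1)) - K (xs (k + 1))
      = K (xs (k + 1) - xs k) + K ((αs (k + 1) - 1) • (xs (k + 1) - xs k)) := fun k => by
    rw [it.xbar_succ, ← map_sub, ← map_add, sub_smul, one_smul]
    congr 1
    abel
  have hKd : Tendsto (fun k => K (xs (k + 1) - xs k)) atTop (𝓝 0) := by
    rw [← map_zero K]; exact (K.continuous.tendsto 0).comp hdx
  simpa only [e, add_zero] using hKd.add (tendsto_apply_smul_zero K hα hdx)

lemma tendsto_adjoint_ybar_sub (it : IsPrimalDualIteration X Y K g h τs σs αs βs xs xbs ys ybs)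
    (hdy : Tendsto (fun k => ys (k + 1) - ys k) atTop (𝓝 0)) :
    Tendsto (fun k => (K†) (ybs (k + 1)) - (K†) (ys (k + 1))) atTop (𝓝 0) := by
  have hβ : Tendsto (fun k => ‖K†‖ * βs k ^ 2) atTop (𝓝 0) := by
    rw [LinearIsometryEquiv.norm_map]
    exact tendsto_mul_sq_of_mul_sq_eq (norm_nonneg K) it.τ_pos it.pc_τ
  simpa only [it.ybar_succ, map_add, add_sub_cancel_left] using tendsto_apply_smul_zero (K†) hβ hdy

lemma isSaddlePointOn_of_tendsto (it : IsPrimalDualIteration X Y K g h τs σs αs βs xs xbs ys ybs)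
    (hX : IsClosed X) (hY : IsClosed Y) (hg : LowerSemicontinuous g) (hh : LowerSemicontinuous h)
    (hdx : Tendsto (fun k => xs (k + 1) - xs k) atTop (𝓝 0))
    (hdy : Tendsto (fun k => ys (k + 1) - ys k) atTop (𝓝 0)) {φ : ℕ → ℕ}
    (hφ : Tendsto φ atTop atTop) (hxφ : Tendsto (fun j => xs (φ j + 1)) atTop (𝓝 p))
    (hyφ : Tendsto (fun j => ys (φ j + 1)) atTop (𝓝 q)) :
    p ∈ X ∧ q ∈ Y ∧ IsSaddlePointOn X Y (lagrangian K g h) p q := by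
  have hφ₁ : Tendsto (fun j => φ j + 1) atTop atTop := (tendsto_add_atTop_nat 1).comp hφ
  have hdxφ : Tendsto (fun j => xs (φ j + 1 + 1) - xs (φ j + 1)) atTop (𝓝 0) := hdx.comp hφ₁
  have hdyφ : Tendsto (fun j => ys (φ j + 1 + 1) - ys (φ j + 1)) atTop (𝓝 0) := hdy.comp hφ₁
  have hxφ' : Tendsto (fun j => xs (φ j + 1 + 1)) atTop (𝓝 p) := by
    simpa using hxφ.add hdxφ
  have hyφ' : Tendsto (fun j => ys (φ j + 1 + 1)) atTop (𝓝 q) := by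
    simpa using hyφ.add hdyφ
  obtain ⟨A, hA⟩ := exists_tendsto_inv_of_mul_sq_eq (norm_nonneg K) it.τ_pos it.pc_τ
  obtain ⟨B, hB⟩ := exists_tendsto_inv_of_mul_sq_eq (norm_nonneg K) it.σ_pos it.pc_σ
  refine ⟨hX.mem_of_tendsto hxφ (Eventually.of_forall fun j => it.mem_X _),
    hY.mem_of_tendsto hyφ (Eventually.of_forall fun j => it.mem_Y _),
    isSaddlePointOn_lagrangian_of_inner_add_le (fun x hx => ?_) (fun y hy => ?_)⟩
  · refine hg.inner_add_le_of_tendsto hxφ' ?_ (fun j => it.x_step (φ j + 1) x hx)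
    have hprox := (hA.comp hφ₁).smul hdxφ.neg
    have hKy := ((it.tendsto_adjoint_ybar_sub hdy).comp hφ₁).add
      ((K†).continuous.tendsto q |>.comp hyφ')
    simpa using hprox.sub hKy
  · refine hh.inner_add_le_of_tendsto hyφ' ?_ (fun j => it.y_step (φ j + 1) y hy)
    have hprox := (hB.comp hφ₁).smul hdyφ.neg
    have hKx := ((it.tendsto_apply_xbar_sub hdx).comp hφ).add (K.continuous.tendsto p |>.comp hxφ)
    simpa using hprox.add hKx

lemma tendsto_of_tendsto_subseq (it : IsPrimalDualIteration X Y K g h τs σs αs βs xs xbs ys ybs)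
    (hδ : 0 < δ) (hτδ : ∀ k, ‖K‖ + δ ≤ (τs k)⁻¹ / 2) (hσδ : ∀ k, ‖K‖ + δ ≤ (σs k)⁻¹ / 2)
    (hp : p ∈ X) (hq : q ∈ Y) (hpq : IsSaddlePointOn X Y (lagrangian K g h) p q)
    (hdx : Tendsto (fun k => xs (k + 1) - xs k) atTop (𝓝 0)) {φ : ℕ → ℕ}
    (hφ : Tendsto φ atTop atTop) (hxφ : Tendsto (fun j => xs (φ j + 1)) atTop (𝓝 p))
    (hyφ : Tendsto (fun j => ys (φ j + 1)) atTop (𝓝 q)) :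
    Tendsto xs atTop (𝓝 p) ∧ Tendsto ys atTop (𝓝 q) := by
  obtain ⟨A, hA⟩ := exists_tendsto_inv_of_mul_sq_eq (norm_nonneg K) it.τ_pos it.pc_τ
  obtain ⟨B, hB⟩ := exists_tendsto_inv_of_mul_sq_eq (norm_nonneg K) it.σ_pos it.pc_σ
  have hE := tendsto_atTop_ciInf (it.antitone_iterateEnergy hδ.le hτδ hσδ hp hq hpq)
    (bddBelow_range_iterateEnergy hδ.le hτδ hσδ)
  have hEφ : Tendsto (fun j => iterateEnergy K τs σs xs ys p q (φ j)) atTop (𝓝 0) :=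
    tendsto_primalDualEnergy_zero (((tendsto_add_atTop_iff_nat 1).2 hA).comp hφ)
      (((tendsto_add_atTop_iff_nat 1).2 hB).comp hφ) hxφ (hdx.comp hφ) hyφ
  rw [tendsto_nhds_unique (hE.comp hφ) hEφ] at hE
  have hr := hE.div_const δ
  rw [zero_div] at hr
  constructor
  · refine (tendsto_add_atTop_iff_nat 1).1 (tendsto_sub_nhds_zero_iff.1
      (tendsto_zero_of_norm_sq_le (fun k => ?_) hr))
    rw [le_div_iff₀' hδ]
    nlinarith [mul_add_le_iterateEnergy (p := p) (q := q) (xs := xs) (ys := ys) hτδ hσδ k,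
      sq_nonneg ‖ys (k + 1) - q‖]
  · refine (tendsto_add_atTop_iff_nat 1).1 (tendsto_sub_nhds_zero_iff.1
      (tendsto_zero_of_norm_sq_le (fun k => ?_) hr))
    rw [le_div_iff₀' hδ]
    nlinarith [mul_add_le_iterateEnergy (p := p) (q := q) (xs := xs) (ys := ys) hτδ hσδ k,
      sq_nonneg ‖xs (k + 1) - p‖]

lemma exists_tendsto_subseq [FiniteDimensional ℝ H₁] [FiniteDimensional ℝ H₂]
    (it : IsPrimalDualIteration X Y K g h τs σs αs βs xs xbs ys ybs)
    (hδ : 0 < δ) (hτδ : ∀ k, ‖K‖ + δ ≤ (τs k)⁻¹ / 2) (hσδ : ∀ k, ‖K‖ + δ ≤ (σs k)⁻¹ / 2)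
    (hp : p ∈ X) (hq : q ∈ Y) (hpq : IsSaddlePointOn X Y (lagrangian K g h) p q) :
    ∃ (x' : H₁) (y' : H₂) (φ : ℕ → ℕ), StrictMono φ ∧
      Tendsto (fun j => xs (φ j + 1)) atTop (𝓝 x') ∧
        Tendsto (fun j => ys (φ j + 1)) atTop (𝓝 y') := by
  set R := iterateEnergy K τs σs xs ys p q 0 / δ
  have hball : ∀ k, (xs (k + 1), ys (k + 1)) ∈ Metric.closedBall (p, q) √R := by
    intro k
    have hk := (mul_add_le_iterateEnergy hτδ hσδ k).trans
      (it.antitone_iterateEnergy hδ.le hτδ hσδ hp hq hpq (Nat.zero_le k))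
    rw [← le_div_iff₀' hδ] at hk
    have hR : 0 ≤ R := (by positivity : (0 : ℝ) ≤ _).trans hk
    rw [Metric.mem_closedBall, Prod.dist_eq, dist_eq_norm, dist_eq_norm]
    exact max_le ((Real.le_sqrt (norm_nonneg _) hR).2 (by nlinarith [sq_nonneg ‖ys (k + 1) - q‖]))
      ((Real.le_sqrt (norm_nonneg _) hR).2 (by nlinarith [sq_nonneg ‖xs (k + 1) - p‖]))
  obtain ⟨z, -, φ, hφ, hz⟩ := tendsto_subseq_of_bounded Metric.isBounded_closedBall hball
  exact ⟨z.1, z.2, φ, hφ, (continuous_fst.tendsto z).comp hz, (continuous_snd.tendsto z).comp hz⟩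

theorem exists_isSaddlePointOn_tendsto [FiniteDimensional ℝ H₁] [FiniteDimensional ℝ H₂]
    (it : IsPrimalDualIteration X Y K g h τs σs αs βs xs xbs ys ybs)
    (hX : IsClosed X) (hY : IsClosed Y) (hg : LowerSemicontinuous g) (hh : LowerSemicontinuous h)
    (hδ : 0 < δ) (hτδ : ∀ k, ‖K‖ + δ ≤ (τs k)⁻¹ / 2) (hσδ : ∀ k, ‖K‖ + δ ≤ (σs k)⁻¹ / 2)
    {x₀ : H₁} {y₀ : H₂} (hx₀ : x₀ ∈ X) (hy₀ : y₀ ∈ Y)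
    (hsad : IsSaddlePointOn X Y (lagrangian K g h) x₀ y₀) :
    ∃ (p : H₁) (q : H₂), (p ∈ X ∧ q ∈ Y ∧ IsSaddlePointOn X Y (lagrangian K g h) p q) ∧
      Tendsto (fun k => (xs k, ys k)) atTop (𝓝 (p, q)) := by
  obtain ⟨hdx, hdy⟩ := it.tendsto_sub_succ hδ hτδ hσδ hx₀ hy₀ hsad
  obtain ⟨p, q, φ, hφ, hxφ, hyφ⟩ := it.exists_tendsto_subseq hδ hτδ hσδ hx₀ hy₀ hsad
  obtain ⟨hp, hq, hpq⟩ :=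
    it.isSaddlePointOn_of_tendsto hX hY hg hh hdx hdy hφ.tendsto_atTop hxφ hyφ
  obtain ⟨hx, hy⟩ :=
    it.tendsto_of_tendsto_subseq hδ hτδ hσδ hp hq hpq hdx hφ.tendsto_atTop hxφ hyφ
  exact ⟨p, q, ⟨hp, hq, hpq⟩, hx.prodMk_nhds hy⟩

end IsPrimalDualIteration

end PrimalDual

/-- `αs i` stands for the paper's `α_{i-1}`: the extrapolation `x̄^{k+1}` uses
`αs (k + 1) = α_k`. -/
theorem stmt_19_general
    {H₁ : Type*} [NormedAddCommGroup H₁] [InnerProductSpace ℝ H₁] [CompleteSpace H₁] [FiniteDimensional ℝ H₁]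
    {H₂ : Type*} [NormedAddCommGroup H₂] [InnerProductSpace ℝ H₂] [CompleteSpace H₂] [FiniteDimensional ℝ H₂]
    (X : Set H₁) (Y : Set H₂)
    (hXcl : IsClosed X)
    (hYcl : IsClosed Y)
    (K : H₁ →L[ℝ] H₂) (g : H₁ → ℝ) (h : H₂ → ℝ)
    (hglsc : LowerSemicontinuous g)
    (hhlsc : LowerSemicontinuous h)
    (f : H₁ → H₂ → ℝ)
    (hf : ∀ x y, f x y = ⟪K x, y⟫ + g x - h y)
    (xs : ℕ → H₁) (ys : ℕ → H₂) (hxX : ∀ k, xs k ∈ X) (hyY : ∀ k, ys k ∈ Y)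
    (τs σs : ℕ → ℝ) (hτ : ∀ k, 0 < τs k) (hσ : ∀ k, 0 < σs k)
    (αs βs : ℕ → ℝ)
    (xbs : ℕ → H₁) (ybs : ℕ → H₂)
    (hxbS : ∀ k, xbs (k+1) = xs (k+1) + αs (k+1) • (xs (k+1) - xs k))
    (hybS : ∀ k, ybs (k+1) = ys (k+1) + βs k • (ys (k+1) - ys k))
    (hiterx : ∀ k, ∀ x ∈ X,
      ⟪(τs k)⁻¹ • (xs k - xs (k+1)) - (ContinuousLinearMap.adjoint K) (ybs (k+1)),
        x - xs (k+1)⟫ + g (xs (k+1)) ≤ g x)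
    (hitery : ∀ k, ∀ y ∈ Y,
      ⟪(σs k)⁻¹ • (ys k - ys (k+1)) + K (xbs k), y - ys (k+1)⟫ + h (ys (k+1)) ≤ h y)
    (hPCβ : ∀ i, ‖K‖ * (βs i)^2 = 1/(τs i) - 1/(τs (i+1)))
    (hPCα : ∀ i, ‖K‖ * (1 - αs i)^2 = 1/(σs i) - 1/(σs (i+1)))
    (hexists : ∃ (xstar : H₁) (ystar : H₂), xstar ∈ X ∧ ystar ∈ Y ∧
      ∀ x ∈ X, ∀ y ∈ Y, f xstar y ≤ f xstar ystar ∧ f xstar ystar ≤ f x ystar)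
    (hKτ : ‖K‖ * Filter.limsup τs Filter.atTop < 1/2)
    (hKσ : ‖K‖ * Filter.limsup σs Filter.atTop < 1/2)
    (hσbdd : BddAbove (Set.range σs))
    (hτbdd : BddAbove (Set.range τs)) :
    ∃ (xstar : H₁) (ystar : H₂),
      (xstar ∈ X ∧ ystar ∈ Y ∧
        ∀ x ∈ X, ∀ y ∈ Y, f xstar y ≤ f xstar ystar ∧ f xstar ystar ≤ f x ystar) ∧
      Filter.Tendsto (fun k => (xs k, ys k)) Filter.atTop (nhds (xstar, ystar)) := by
  obtain ⟨x₀, y₀, hx₀, hy₀, hsad₀⟩ := hexists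
  obtain rfl : f = lagrangian K g h := funext₂ hf
  have it : IsPrimalDualIteration X Y K g h τs σs αs βs xs xbs ys ybs :=
    ⟨hxX, hyY, hτ, hσ, hxbS, hybS, hiterx, hitery, hPCβ, hPCα⟩
  obtain ⟨δτ, hδτ, hτδ⟩ := exists_pos_add_le_inv_div_two hτ
    (monotone_of_mul_sq_eq (norm_nonneg K) hτ hPCβ) hτbdd hKτ
  obtain ⟨δσ, hδσ, hσδ⟩ := exists_pos_add_le_inv_div_two hσ
    (monotone_of_mul_sq_eq (norm_nonneg K) hσ hPCα) hσbdd hKσ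
  obtain ⟨p, q, ⟨hp, hq, hpq⟩, hlim⟩ := it.exists_isSaddlePointOn_tendsto hXcl hYcl hglsc hhlsc
    (lt_min hδτ hδσ) (fun k => le_trans (by gcongr; exact min_le_left _ _) (hτδ k))
    (fun k => le_trans (by gcongr; exact min_le_right _ _) (hσδ k)) hx₀ hy₀
    (fun x hx y hy => (hsad₀ x hx y hy).1.trans (hsad₀ x hx y hy).2)
  exact ⟨p, q, ⟨hp, hq, fun x hx y hy => ⟨hpq p hp y hy, hpq x hx q hq⟩⟩, hlim⟩

/-- Theorem 4.15(ii): in finite dimensions, the iterate sequence converges in norm to a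
saddle-point of `f`.  Here `αs i` models
the shifted family `α_{i-1}`, so the extrapolation update for `x̄^{k+1}` uses
`αs (k+1) = α_k`, and (PC) reads `‖K‖·(1 − αs i)² = 1/σ_i − 1/σ_{i+1}`. -/
theorem stmt_19
    {H₁ : Type*} [NormedAddCommGroup H₁] [InnerProductSpace ℝ H₁] [CompleteSpace H₁] [FiniteDimensional ℝ H₁]
    {H₂ : Type*} [NormedAddCommGroup H₂] [InnerProductSpace ℝ H₂] [CompleteSpace H₂] [FiniteDimensional ℝ H₂]
    (X : Set H₁) (Y : Set H₂)
    (hXne : X.Nonempty) (hXcl : IsClosed X) (hXcv : Convex ℝ X)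
    (hYne : Y.Nonempty) (hYcl : IsClosed Y) (hYcv : Convex ℝ Y)
    (K : H₁ →L[ℝ] H₂) (g : H₁ → ℝ) (h : H₂ → ℝ)
    (hg : ConvexOn ℝ Set.univ g) (hglsc : LowerSemicontinuous g)
    (hh : ConvexOn ℝ Set.univ h) (hhlsc : LowerSemicontinuous h)
    (f : H₁ → H₂ → ℝ)
    (hf : ∀ x y, f x y = ⟪K x, y⟫ + g x - h y)
    (xs : ℕ → H₁) (ys : ℕ → H₂) (hxX : ∀ k, xs k ∈ X) (hyY : ∀ k, ys k ∈ Y)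
    (τs σs : ℕ → ℝ) (hτ : ∀ k, 0 < τs k) (hσ : ∀ k, 0 < σs k)
    (αs βs : ℕ → ℝ) (hα : ∀ k, 0 ≤ αs k) (hβ : ∀ k, 0 ≤ βs k)
    (xbs : ℕ → H₁) (ybs : ℕ → H₂)
    (hxb0 : xbs 0 = xs 0)
    (hxbS : ∀ k, xbs (k+1) = xs (k+1) + αs (k+1) • (xs (k+1) - xs k))
    (hyb0 : ybs 0 = ys 0)
    (hybS : ∀ k, ybs (k+1) = ys (k+1) + βs k • (ys (k+1) - ys k))
    (hiterx : ∀ k, ∀ x ∈ X,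
      ⟪(τs k)⁻¹ • (xs k - xs (k+1)) - (ContinuousLinearMap.adjoint K) (ybs (k+1)),
        x - xs (k+1)⟫ + g (xs (k+1)) ≤ g x)
    (hitery : ∀ k, ∀ y ∈ Y,
      ⟪(σs k)⁻¹ • (ys k - ys (k+1)) + K (xbs k), y - ys (k+1)⟫ + h (ys (k+1)) ≤ h y)
    (hPCβ : ∀ i, ‖K‖ * (βs i)^2 = 1/(τs i) - 1/(τs (i+1)))
    (hPCα : ∀ i, ‖K‖ * (1 - αs i)^2 = 1/(σs i) - 1/(σs (i+1)))
    (hexists : ∃ (xstar : H₁) (ystar : H₂), xstar ∈ X ∧ ystar ∈ Y ∧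
      ∀ x ∈ X, ∀ y ∈ Y, f xstar y ≤ f xstar ystar ∧ f xstar ystar ≤ f x ystar)
    (hKτ : ‖K‖ * Filter.limsup τs Filter.atTop < 1/2)
    (hKσ : ‖K‖ * Filter.limsup σs Filter.atTop < 1/2)
    (hαbdd : BddAbove (Set.range αs)) (hβbdd : BddAbove (Set.range βs))
    (hσinf : 0 < ⨅ k, σs k) (hσbdd : BddAbove (Set.range σs))
    (hτinf : 0 < ⨅ k, τs k) (hτbdd : BddAbove (Set.range τs)) :
    ∃ (xstar : H₁) (ystar : H₂),
      (xstar ∈ X ∧ ystar ∈ Y ∧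
        ∀ x ∈ X, ∀ y ∈ Y, f xstar y ≤ f xstar ystar ∧ f xstar ystar ≤ f x ystar) ∧
      Filter.Tendsto (fun k => (xs k, ys k)) Filter.atTop (nhds (xstar, ystar)) :=
  stmt_19_general X Y hXcl hYcl K g h hglsc hhlsc f hf xs ys hxX hyY τs σs hτ hσ αs βs xbs ybs hxbS
    hybS hiterx hitery hPCβ hPCα hexists hKτ hKσ hσbdd hτbdd
end
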